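/- Let f : [0,1] → ℝ be C² with |f''| ≤ K. Then the Fourier–Legendre series Σ_{i=0}^∞ c_i φ_i with c_i = ∫₀¹ f φ_i converges to f uniformly on [0,1]. -/

import Mathlib

/-!
The `φᵢ` are orthonormal on `[0, 1]` and are eigenfunctions, with eigenvalues `-i (i + 1)`, of
the operator `u ↦ (t (1 - t) u')'`, which is symmetric because its weight vanishes at both ends.
Integrating by parts twice therefore gives `i (i + 1) |cᵢ| = |⟪(t (1 - t) f')', φᵢ⟫|`, which
Bessel's inequality bounds by `‖(t (1 - t) f')'‖₂`. Together with `|φᵢ| ≤ √(2i + 1)` (a Lyapunov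
function of the Legendre equation gives `|Pᵢ| ≤ 1` on `[-1, 1]`) this makes
`∑ ‖cᵢ φᵢ‖∞ ≲ ∑ i ^ (-3/2)` finite, so the series converges uniformly to a continuous `g` with the
same coefficients as `f`. As the `Pᵢ` span all polynomials, `f - g` is orthogonal to every
polynomial, hence zero by Weierstrass approximation.
-/

open Filter

/-- The Legendre polynomials, via the three-term recurrence. -/
noncomputable def legendreP : ℕ → ℝ → ℝ
  | 0, _ => 1
  | 1, x => x
  | n + 2, x =>
      ((2 * (n : ℝ) + 3) * x * legendreP (n + 1) x - ((n : ℝ) + 1) * legendreP n x) /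
        ((n : ℝ) + 2)

/-- The Legendre scaling functions on `[0,1]`. -/
noncomputable def legendreScaling (i : ℕ) (x : ℝ) : ℝ :=
  Real.sqrt (2 * i + 1) * legendreP i (2 * x - 1)

/-- The `n`-th partial Fourier sum with respect to the Legendre scaling functions. -/
noncomputable def legendrePartialSum (n : ℕ) (f : ℝ → ℝ) (x : ℝ) : ℝ :=
  ∑ i ∈ Finset.range n, (∫ t in (0:ℝ)..1, f t * legendreScaling i t) * legendreScaling i x

open Polynomial MeasureTheory

section SturmLiouville

variable {a b : ℝ} {u v w : ℝ → ℝ}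

theorem integral_mul_deriv_mul_deriv_eq_neg (hu : ContDiff ℝ 1 u) (hv : ContDiff ℝ 2 v)
    (hw : ContDiff ℝ 1 w) (ha : w a = 0) (hb : w b = 0) :
    ∫ t in a..b, u t * deriv (fun t => w t * deriv v t) t =
      -∫ t in a..b, w t * deriv u t * deriv v t := by
  have hg : ContDiff ℝ 1 (fun t => w t * deriv v t) := hw.mul hv.deriv'
  rw [intervalIntegral.integral_mul_deriv_eq_deriv_mul
    (fun t _ => (hu.differentiable one_ne_zero t).hasDerivAt)
    (fun t _ => (hg.differentiable one_ne_zero t).hasDerivAt)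
    ((hu.continuous_deriv le_rfl).intervalIntegrable _ _)
    ((hg.continuous_deriv le_rfl).intervalIntegrable _ _)]
  simp only [ha, hb, zero_mul, mul_zero, sub_zero, zero_sub, neg_inj]
  exact intervalIntegral.integral_congr fun t _ => by ring

theorem integral_mul_deriv_mul_deriv_comm (hu : ContDiff ℝ 2 u) (hv : ContDiff ℝ 2 v)
    (hw : ContDiff ℝ 1 w) (ha : w a = 0) (hb : w b = 0) :
    ∫ t in a..b, u t * deriv (fun t => w t * deriv v t) t =
      ∫ t in a..b, deriv (fun t => w t * deriv u t) t * v t := by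
  simp_rw [integral_mul_deriv_mul_deriv_eq_neg (hu.of_le (by norm_num)) hv hw ha hb,
    mul_comm _ (v _), integral_mul_deriv_mul_deriv_eq_neg (hv.of_le (by norm_num)) hu hw ha hb,
    neg_inj]
  exact intervalIntegral.integral_congr fun t _ => by ring

end SturmLiouville

theorem sq_integral_mul_le_integral_sq {a b : ℝ} (hab : a ≤ b) {g φ : ℝ → ℝ} (hg : Continuous g)
    (hφ : Continuous φ) (hφ_norm : ∫ t in a..b, φ t * φ t = 1) :
    (∫ t in a..b, g t * φ t) ^ 2 ≤ ∫ t in a..b, g t ^ 2 := by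
  set B := ∫ t in a..b, g t * φ t
  have hint : ∀ {F : ℝ → ℝ}, Continuous F → IntervalIntegrable F volume a b :=
    fun hF => hF.intervalIntegrable _ _
  -- `0 ≤ ‖g - B φ‖² = ‖g‖² - B²`
  have hexpand : ∫ t in a..b, (g t - B * φ t) ^ 2 = (∫ t in a..b, g t ^ 2) - B ^ 2 := by
    have hpt : ∀ t, (g t - B * φ t) ^ 2 = g t ^ 2 - 2 * B * (g t * φ t) + B ^ 2 * (φ t * φ t) :=
      fun t => by ring
    simp_rw [hpt]
    rw [intervalIntegral.integral_add (hint (by fun_prop)) (hint (by fun_prop)),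
      intervalIntegral.integral_sub (hint (by fun_prop)) (hint (by fun_prop)),
      intervalIntegral.integral_const_mul, intervalIntegral.integral_const_mul, hφ_norm]
    ring
  have := intervalIntegral.integral_nonneg (μ := volume) hab fun t _ => sq_nonneg (g t - B * φ t)
  linarith

theorem eqOn_zero_of_forall_integral_mul_eval_eq_zero {a b : ℝ} (hab : a < b) {h : ℝ → ℝ}
    (hh : ContinuousOn h (Set.Icc a b)) (horth : ∀ p : ℝ[X], ∫ t in a..b, h t * p.eval t = 0) :
    Set.EqOn h 0 (Set.Icc a b) := by
  have hI : ∀ {F : ℝ → ℝ}, ContinuousOn F (Set.Icc a b) → IntervalIntegrable F volume a b :=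
    fun hF => hF.intervalIntegrable_of_Icc hab.le
  set C := ∫ t in a..b, |h t|
  have hC : 0 ≤ C := intervalIntegral.integral_nonneg hab.le fun t _ => abs_nonneg _
  -- If `|h - p| ≤ δ` on `[a, b]`, orthogonality to `p` gives `∫ h² = ∫ h (h - p) ≤ δ ∫ |h|`.
  have hsq : ∫ t in a..b, h t ^ 2 ≤ 0 := by
    refine le_of_forall_pos_le_add fun ε hε => ?_
    obtain ⟨p, hp⟩ := exists_polynomial_near_of_continuousOn a b h hh (ε / (C + 1)) (by positivity)
    have hpc : ContinuousOn (fun t => p.eval t) (Set.Icc a b) := p.continuousOn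
    calc ∫ t in a..b, h t ^ 2 = ∫ t in a..b, h t * (h t - p.eval t) := by
          rw [← sub_zero (∫ t in a..b, h t ^ 2), ← horth p,
            ← intervalIntegral.integral_sub (f := fun t => h t ^ 2) (g := fun t => h t * p.eval t)
              (hI (hh.pow 2)) (hI (hh.mul hpc))]
          exact intervalIntegral.integral_congr fun t _ => by ring
      _ ≤ ∫ t in a..b, |h t| * (ε / (C + 1)) := by
          refine intervalIntegral.integral_mono_on hab.le (hI (hh.mul (hh.sub hpc)))
            (hI (hh.abs.mul continuousOn_const)) fun t ht => ?_
          calc h t * (h t - p.eval t) ≤ |h t| * |h t - p.eval t| := by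
                rw [← abs_mul]; exact le_abs_self _
            _ ≤ |h t| * (ε / (C + 1)) := by gcongr; rw [abs_sub_comm]; exact (hp t ht).le
      _ = C * ε / (C + 1) := by rw [intervalIntegral.integral_mul_const]; ring
      _ ≤ 0 + ε := by
          rw [zero_add, div_le_iff₀ (by positivity)]
          nlinarith
  intro x hx
  by_contra hne
  have hpos : 0 < ∫ t in a..b, h t ^ 2 :=
    intervalIntegral.integral_pos hab (hh.pow 2) (fun t _ => sq_nonneg _)
      ⟨x, hx, sq_pos_of_ne_zero hne⟩
  linarith

theorem integral_tsum_mul_eq_of_orthonormal {a b : ℝ} (hab : a ≤ b) {φ : ℕ → ℝ → ℝ}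
    (hφ : ∀ i, Continuous (φ i))
    (horth : ∀ i j, ∫ t in a..b, φ i t * φ j t = if i = j then 1 else 0)
    {c u : ℕ → ℝ} (hu : Summable u) (hcu : ∀ i, ∀ t ∈ Set.Icc a b, ‖c i * φ i t‖ ≤ u i) (j : ℕ) :
    ∫ t in a..b, (∑' i, c i * φ i t) * φ j t = c j := by
  have hIoc : Set.uIoc a b ⊆ Set.Icc a b := by
    rw [Set.uIoc_of_le hab]; exact Set.Ioc_subset_Icc_self
  have hsum : HasSum (fun i => ∫ t in a..b, c i * φ i t * φ j t)
      (∫ t in a..b, (∑' i, c i * φ i t) * φ j t) := by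
    refine intervalIntegral.hasSum_integral_of_dominated_convergence (fun i t => u i * |φ j t|)
      (fun i => by fun_prop) (fun i => ae_of_all _ fun t ht => ?_)
      (ae_of_all _ fun t _ => hu.mul_right _) ?_ (ae_of_all _ fun t ht => ?_)
    · rw [norm_mul, Real.norm_eq_abs]
      exact mul_le_mul_of_nonneg_right (hcu i t (hIoc ht)) (abs_nonneg _)
    · simp_rw [tsum_mul_right]
      exact (continuous_const.mul (hφ j).abs).intervalIntegrable _ _
    · exact ((hu.of_norm_bounded fun i => hcu i t (hIoc ht)).hasSum).mul_right _
  have hcoeff :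
      (fun i => ∫ t in a..b, c i * φ i t * φ j t) = fun i => if i = j then c j else 0 := by
    ext i
    simp_rw [mul_assoc, intervalIntegral.integral_const_mul, horth]
    split_ifs with hij <;> simp [hij]
  rw [hcoeff] at hsum
  exact hsum.unique (hasSum_ite_eq j (c j))

theorem eqOn_tsum_of_orthonormal {a b : ℝ} (hab : a ≤ b) {φ : ℕ → ℝ → ℝ}
    (hφ : ∀ i, Continuous (φ i))
    (horth : ∀ i j, ∫ t in a..b, φ i t * φ j t = if i = j then 1 else 0)
    (hcomplete : ∀ h : ℝ → ℝ, ContinuousOn h (Set.Icc a b) →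
      (∀ i, ∫ t in a..b, h t * φ i t = 0) → Set.EqOn h 0 (Set.Icc a b))
    {f : ℝ → ℝ} (hf : ContinuousOn f (Set.Icc a b)) {u : ℕ → ℝ} (hu : Summable u)
    (hfu : ∀ i, ∀ t ∈ Set.Icc a b, ‖(∫ s in a..b, f s * φ i s) * φ i t‖ ≤ u i) :
    Set.EqOn f (fun t => ∑' i, (∫ s in a..b, f s * φ i s) * φ i t) (Set.Icc a b) := by
  set c : ℕ → ℝ := fun i => ∫ s in a..b, f s * φ i s
  set g : ℝ → ℝ := fun t => ∑' i, c i * φ i t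
  have hg : ContinuousOn g (Set.Icc a b) :=
    (tendstoUniformlyOn_tsum_nat hu hfu).continuousOn (Frequently.of_forall fun n =>
      (continuous_finsetSum _ fun i _ => continuous_const.mul (hφ i)).continuousOn)
  have hcoeff (j : ℕ) : ∫ t in a..b, (f t - g t) * φ j t = 0 := by
    have hgj : ∫ t in a..b, g t * φ j t = c j :=
      integral_tsum_mul_eq_of_orthonormal hab hφ horth hu hfu j
    simp_rw [sub_mul]
    rw [intervalIntegral.integral_sub (f := fun t => f t * φ j t) (g := fun t => g t * φ j t)
      ((hf.mul (hφ j).continuousOn).intervalIntegrable_of_Icc hab)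
      ((hg.mul (hφ j).continuousOn).intervalIntegrable_of_Icc hab), hgj, sub_self]
  exact fun x hx => sub_eq_zero.mp (hcomplete _ (hf.sub hg) hcoeff hx)

theorem summable_abs_mul_sqrt_of_mul_abs_le {c : ℕ → ℝ} {M : ℝ}
    (hc : ∀ i : ℕ, i * (i + 1) * |c i| ≤ M) : Summable fun i : ℕ => |c i| * √(2 * i + 1) := by
  refine Summable.of_norm_bounded_eventually_nat
    ((Real.summable_nat_rpow_inv.mpr (by norm_num : (1 : ℝ) < 3 / 2)).mul_left (M * √3)) ?_
  filter_upwards [eventually_ge_atTop 1] with i hi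
  have hi' : (0 : ℝ) < i := by exact_mod_cast hi
  have hpow : (i : ℝ) ^ (3 / 2 : ℝ) = i * √i := by
    rw [show (3 / 2 : ℝ) = 1 + 1 / 2 by norm_num, Real.rpow_add hi', Real.rpow_one,
      Real.sqrt_eq_rpow]
  have hsqrt : √(2 * i + 1) * √i ≤ √3 * (i + 1) := by
    rw [← Real.sqrt_mul (by positivity), ← Real.sqrt_sq (by positivity : (0 : ℝ) ≤ i + 1),
      ← Real.sqrt_mul (by norm_num)]
    exact Real.sqrt_le_sqrt (by nlinarith)
  rw [Real.norm_of_nonneg (by positivity), hpow, ← div_eq_mul_inv, le_div_iff₀ (by positivity)]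
  calc |c i| * √(2 * i + 1) * (i * √i) = |c i| * i * (√(2 * i + 1) * √i) := by ring
    _ ≤ |c i| * i * (√3 * (i + 1)) := by gcongr
    _ = √3 * (i * (i + 1) * |c i|) := by ring
    _ ≤ √3 * M := by gcongr; exact hc i
    _ = M * √3 := mul_comm _ _

noncomputable def legendrePoly : ℕ → ℝ[X]
  | 0 => 1
  | 1 => X
  | n + 2 => C ((2 * (n : ℝ) + 3) / (n + 2)) * (X * legendrePoly (n + 1)) -
      C (((n : ℝ) + 1) / (n + 2)) * legendrePoly n

theorem legendrePoly_recurrence (n : ℕ) :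
    ((n : ℝ[X]) + 2) * legendrePoly (n + 2) =
      (2 * (n : ℝ[X]) + 3) * X * legendrePoly (n + 1) - ((n : ℝ[X]) + 1) * legendrePoly n := by
  have hn : (n : ℝ) + 2 ≠ 0 := by positivity
  have hC : ∀ r : ℝ, ((n : ℝ[X]) + 2) * C (r / (n + 2)) = C r := fun r => by
    rw [show (n : ℝ[X]) + 2 = C ((n : ℝ) + 2) by simp [C_ofNat], ← C_mul, mul_div_cancel₀ _ hn]
  have h₁ : ((n : ℝ[X]) + 2) * C ((2 * (n : ℝ) + 3) / (n + 2)) = 2 * n + 3 := by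
    rw [hC]; simp [C_ofNat]
  have h₀ : ((n : ℝ[X]) + 2) * C (((n : ℝ) + 1) / (n + 2)) = n + 1 := by
    rw [hC]; simp
  rw [legendrePoly]
  linear_combination (X * legendrePoly (n + 1)) * h₁ - legendrePoly n * h₀

theorem eval_legendrePoly (n : ℕ) (x : ℝ) : (legendrePoly n).eval x = legendreP n x := by
  induction n using Nat.twoStepInduction with
  | zero => simp [legendrePoly, legendreP]
  | one => simp [legendrePoly, legendreP]
  | more n ih₀ ih₁ =>
    simp only [legendrePoly, legendreP, eval_sub, eval_mul, eval_C, eval_X, ih₀, ih₁]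
    ring

theorem legendrePoly_eval_one (n : ℕ) : (legendrePoly n).eval 1 = 1 := by
  induction n using Nat.twoStepInduction with
  | zero => simp [legendrePoly]
  | one => simp [legendrePoly]
  | more n ih₀ ih₁ =>
    simp only [legendrePoly, eval_sub, eval_mul, eval_C, eval_X, ih₀, ih₁]
    field_simp
    ring

theorem legendrePoly_eval_neg_one (n : ℕ) : (legendrePoly n).eval (-1) = (-1) ^ n := by
  induction n using Nat.twoStepInduction with
  | zero => simp [legendrePoly]
  | one => simp [legendrePoly]
  | more n ih₀ ih₁ =>
    simp only [legendrePoly, eval_sub, eval_mul, eval_C, eval_X, ih₀, ih₁]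
    field_simp
    ring

theorem degree_legendrePoly (n : ℕ) : (legendrePoly n).degree = n := by
  induction n using Nat.twoStepInduction with
  | zero => simp [legendrePoly]
  | one => simp [legendrePoly]
  | more n ih₀ ih₁ =>
    have hX : (C ((2 * (n : ℝ) + 3) / (n + 2)) * (X * legendrePoly (n + 1))).degree = ↑(n + 2) := by
      rw [degree_C_mul (by positivity), degree_mul, degree_X, ih₁]
      norm_cast
      omega
    have hlow : (C (((n : ℝ) + 1) / (n + 2)) * legendrePoly n).degree < ↑(n + 2) := by
      rw [degree_C_mul (by positivity), ih₀]
      exact_mod_cast (by omega : n < n + 2)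
    rw [legendrePoly, degree_sub_eq_left_of_degree_lt (hX ▸ hlow), hX]

theorem legendrePoly_derivative_recurrences (n : ℕ) :
    derivative (legendrePoly (n + 1)) =
        X * derivative (legendrePoly n) + ((n : ℝ[X]) + 1) * legendrePoly n ∧
      X * derivative (legendrePoly (n + 1)) =
        derivative (legendrePoly n) + ((n : ℝ[X]) + 1) * legendrePoly (n + 1) := by
  induction n with
  | zero => simp [legendrePoly]
  | succ n ih =>
    obtain ⟨hB, hC⟩ := ih
    have hn : ((n : ℝ[X]) + 2) ≠ 0 := by exact_mod_cast (by omega : n + 2 ≠ 0)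
    have hrec := legendrePoly_recurrence n
    have hder := congrArg derivative hrec
    simp only [derivative_mul, derivative_add, derivative_sub, derivative_natCast,
      derivative_ofNat, derivative_one, derivative_X, zero_mul, zero_add, add_zero, mul_one] at hder
    push_cast
    have hB' : derivative (legendrePoly (n + 2)) =
        X * derivative (legendrePoly (n + 1)) + ((n : ℝ[X]) + 2) * legendrePoly (n + 1) :=
      mul_left_cancel₀ hn (by linear_combination hder + ((n : ℝ[X]) + 1) * hC)
    refine ⟨by linear_combination hB', mul_left_cancel₀ hn ?_⟩
    linear_combination ((n : ℝ[X]) + 2) * X * hB' - ((n : ℝ[X]) + 2) * hrec +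
      ((n : ℝ[X]) + 2) * (X * hC - hB)

theorem legendrePoly_ode (n : ℕ) :
    derivative ((1 - X ^ 2) * derivative (legendrePoly n)) =
      -((n : ℝ[X]) * ((n : ℝ[X]) + 1)) * legendrePoly n := by
  cases n with
  | zero => simp [legendrePoly]
  | succ n =>
    obtain ⟨hB, hC⟩ := legendrePoly_derivative_recurrences n
    have hP : (1 - X ^ 2) * derivative (legendrePoly (n + 1)) =
        ((n : ℝ[X]) + 1) * (legendrePoly n - X * legendrePoly (n + 1)) := by
      linear_combination hB - X * hC
    rw [hP]
    simp only [derivative_mul, derivative_sub, derivative_add, derivative_natCast,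
      derivative_one, derivative_X]
    push_cast
    linear_combination (-(n : ℝ[X]) - 1) * hC

/-- A Lyapunov function of the Legendre equation: it equals `n (n + 1)` at `±1` and dominates
`n (n + 1) P n ^ 2` on `[-1, 1]`. -/
noncomputable def legendreEnergy (n : ℕ) : ℝ[X] :=
  (n : ℝ[X]) * ((n : ℝ[X]) + 1) * legendrePoly n ^ 2 + (1 - X ^ 2) * derivative (legendrePoly n) ^ 2

theorem derivative_legendreEnergy (n : ℕ) :
    derivative (legendreEnergy n) = 2 * X * derivative (legendrePoly n) ^ 2 := by
  have hODE := legendrePoly_ode n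
  simp only [legendreEnergy, derivative_mul, derivative_sub, derivative_add, derivative_natCast,
    derivative_one, derivative_X, derivative_pow, Nat.cast_ofNat, map_ofNat] at hODE ⊢
  linear_combination 2 * derivative (legendrePoly n) * hODE

theorem eval_legendreEnergy_le (n : ℕ) {x : ℝ} (hx : x ∈ Set.Icc (-1 : ℝ) 1) :
    (legendreEnergy n).eval x ≤ n * (n + 1) := by
  set W := legendreEnergy n
  have hW' : ∀ y, deriv W.eval y = 2 * y * (derivative (legendrePoly n)).eval y ^ 2 := fun y => by
    rw [Polynomial.deriv, derivative_legendreEnergy]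
    simp only [eval_mul, eval_pow, eval_X, eval_ofNat]
  rcases le_total x 0 with hx0 | hx0
  · have hanti : AntitoneOn W.eval (Set.Icc (-1) 0) :=
      antitoneOn_of_deriv_nonpos (convex_Icc _ _) W.continuousOn W.differentiableOn fun y hy => by
        rw [interior_Icc] at hy
        rw [hW']
        nlinarith [hy.2, sq_nonneg ((derivative (legendrePoly n)).eval y)]
    have := hanti ⟨le_rfl, by norm_num⟩ ⟨hx.1, hx0⟩ hx.1
    simpa [W, legendreEnergy, legendrePoly_eval_neg_one, ← pow_mul, pow_mul'] using this
  · have hmono : MonotoneOn W.eval (Set.Icc 0 1) :=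
      monotoneOn_of_deriv_nonneg (convex_Icc _ _) W.continuousOn W.differentiableOn fun y hy => by
        rw [interior_Icc] at hy
        rw [hW']
        have := hy.1
        positivity
    have := hmono ⟨hx0, hx.2⟩ ⟨by norm_num, le_rfl⟩ hx.2
    simpa [W, legendreEnergy, legendrePoly_eval_one] using this

theorem abs_eval_legendrePoly_le_one (n : ℕ) {x : ℝ} (hx : x ∈ Set.Icc (-1 : ℝ) 1) :
    |(legendrePoly n).eval x| ≤ 1 := by
  rcases Nat.eq_zero_or_pos n with rfl | hn
  · simp [legendrePoly]
  have hW := eval_legendreEnergy_le n hx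
  have hx2 : x ^ 2 ≤ 1 := by nlinarith [hx.1, hx.2]
  have hn' : (0 : ℝ) < n * (n + 1) := by positivity
  simp only [legendreEnergy, eval_add, eval_mul, eval_pow, eval_sub, eval_one, eval_X,
    eval_natCast] at hW
  have hsq : (legendrePoly n).eval x ^ 2 ≤ 1 := by
    nlinarith [sq_nonneg ((derivative (legendrePoly n)).eval x)]
  exact abs_le_one_iff_mul_self_le_one.mpr (by nlinarith)

theorem hasDerivAt_eval_two_mul_sub_one (p : ℝ[X]) (t : ℝ) :
    HasDerivAt (fun s => p.eval (2 * s - 1)) (2 * (derivative p).eval (2 * t - 1)) t := by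
  have h := (p.hasDerivAt (2 * t - 1)).comp t (((hasDerivAt_id t).const_mul 2).sub_const 1)
  exact h.congr_deriv (by ring)

theorem contDiff_eval_two_mul_sub_one (p : ℝ[X]) {n : WithTop ℕ∞} :
    ContDiff ℝ n (fun t => p.eval (2 * t - 1)) :=
  (p.contDiff_aeval n).comp (by fun_prop)

/-- The substitution `x = 2t - 1` turns the Legendre operator `((1 - x²) p')'` on `[-1, 1]`
into `(t (1 - t) q')'` on `[0, 1]`. -/
theorem deriv_mul_deriv_eval_two_mul_sub_one (p : ℝ[X]) (x : ℝ) :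
    deriv (fun t => t * (1 - t) * deriv (fun s => p.eval (2 * s - 1)) t) x =
      (derivative ((1 - X ^ 2) * derivative p)).eval (2 * x - 1) := by
  have hw : (fun t => t * (1 - t) * deriv (fun s => p.eval (2 * s - 1)) t) =
      fun t => ((1 - X ^ 2) * derivative p).eval (2 * t - 1) / 2 := by
    ext t
    rw [(hasDerivAt_eval_two_mul_sub_one p t).deriv]
    simp only [eval_mul, eval_sub, eval_one, eval_pow, eval_X]
    ring
  rw [hw, ((hasDerivAt_eval_two_mul_sub_one _ x).div_const 2).deriv]
  ring

theorem deriv_mul_deriv_eval_legendrePoly (n : ℕ) (x : ℝ) :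
    deriv (fun t => t * (1 - t) * deriv (fun s => (legendrePoly n).eval (2 * s - 1)) t) x =
      -(n * (n + 1)) * (legendrePoly n).eval (2 * x - 1) := by
  rw [deriv_mul_deriv_eval_two_mul_sub_one, legendrePoly_ode]
  simp

theorem integral_eval_legendrePoly_mul_eq_zero {m n : ℕ} (hmn : m ≠ n) :
    ∫ t in (0 : ℝ)..1, (legendrePoly m).eval (2 * t - 1) * (legendrePoly n).eval (2 * t - 1) =
      0 := by
  have h := integral_mul_deriv_mul_deriv_comm (a := 0) (b := 1) (w := fun t => t * (1 - t))
    (contDiff_eval_two_mul_sub_one (legendrePoly m))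
    (contDiff_eval_two_mul_sub_one (legendrePoly n))
    (by fun_prop) (by norm_num) (by norm_num)
  simp_rw [deriv_mul_deriv_eval_legendrePoly, mul_left_comm ((legendrePoly m).eval _), mul_assoc,
    intervalIntegral.integral_const_mul] at h
  have hne : (n : ℝ) * (n + 1) - m * (m + 1) ≠ 0 := by
    intro h'
    exact hmn (by exact_mod_cast (by nlinarith : (m : ℝ) = n))
  exact (mul_eq_zero.mp (by linear_combination -h)).resolve_left hne

noncomputable def shiftedMoment (h : ℝ → ℝ) (hh : IntervalIntegrable h volume 0 1) :
    ℝ[X] →ₗ[ℝ] ℝ where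
  toFun p := ∫ t in (0 : ℝ)..1, h t * p.eval (2 * t - 1)
  map_add' p q := by
    simp only [eval_add, mul_add]
    exact intervalIntegral.integral_add
      (hh.mul_continuousOn (by fun_prop))
      (hh.mul_continuousOn (by fun_prop))
  map_smul' c p := by
    simp only [eval_smul, smul_eq_mul, RingHom.id_apply, mul_left_comm (h _) c]
    exact intervalIntegral.integral_const_mul c _

theorem shiftedMoment_apply (h : ℝ → ℝ) (hh : IntervalIntegrable h volume 0 1) (p : ℝ[X]) :
    shiftedMoment h hh p = ∫ t in (0 : ℝ)..1, h t * p.eval (2 * t - 1) := rfl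

theorem integral_eval_legendrePoly_mul_self (n : ℕ) :
    ∫ t in (0 : ℝ)..1, (legendrePoly n).eval (2 * t - 1) * (legendrePoly n).eval (2 * t - 1) =
      1 / (2 * n + 1) := by
  induction n using Nat.twoStepInduction with
  | zero => simp [legendrePoly]
  | one =>
    have h := intervalIntegral.integral_comp_mul_sub (a := 0) (b := 1) (fun x : ℝ => x ^ 2)
      two_ne_zero 1
    simp only [legendrePoly, eval_X]
    simp only [← sq, h]
    norm_num [integral_pow]
  | more n _ ih =>
    -- Pair the recurrence for `P (n + 2)` with `P (n + 2)`, and that for `P (n + 3)` with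
    -- `P (n + 1)`; orthogonality leaves two equations in `‖P (n + 1)‖²`, `‖P (n + 2)‖²` and
    -- `⟪X P (n + 1), P (n + 2)⟫`.
    let J (k : ℕ) := shiftedMoment (fun t => (legendrePoly k).eval (2 * t - 1))
      (Continuous.intervalIntegrable (by fun_prop) _ _)
    have hJC : ∀ k c p, J k (C c * p) = c * J k p := fun k c p => by
      rw [← smul_eq_C_mul, map_smul, smul_eq_mul]
    have hA : J (n + 2) (X * legendrePoly (n + 1)) = J (n + 1) (X * legendrePoly (n + 2)) :=
      intervalIntegral.integral_congr fun t _ => by simp only [eval_mul, eval_X]; ring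
    have hJ : ∀ k m, J k (legendrePoly m) =
        ∫ t in (0 : ℝ)..1, (legendrePoly k).eval (2 * t - 1) * (legendrePoly m).eval (2 * t - 1) :=
      fun _ _ => rfl
    have h₁ := congrArg (J (n + 2)) (legendrePoly.eq_3 n)
    have h₂ := congrArg (J (n + 1)) (legendrePoly.eq_3 (n + 1))
    simp only [Nat.succ_eq_add_one, Nat.add_assoc, Nat.reduceAdd, map_sub, hJC] at h₁ h₂
    rw [← hA, hJ (n + 1) (n + 3), integral_eval_legendrePoly_mul_eq_zero (by omega), hJ, ih] at h₂
    rw [hJ (n + 2) n, integral_eval_legendrePoly_mul_eq_zero (by omega), hJ] at h₁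
    rw [h₁]
    push_cast at h₂ ⊢
    field_simp at h₂ ⊢
    linear_combination -h₂

theorem legendreScaling_eq (i : ℕ) (t : ℝ) :
    legendreScaling i t = √(2 * i + 1) * (legendrePoly i).eval (2 * t - 1) := by
  rw [legendreScaling, eval_legendrePoly]

theorem integral_mul_legendreScaling (h : ℝ → ℝ) (i : ℕ) :
    ∫ t in (0 : ℝ)..1, h t * legendreScaling i t =
      √(2 * i + 1) * ∫ t in (0 : ℝ)..1, h t * (legendrePoly i).eval (2 * t - 1) := by
  rw [← intervalIntegral.integral_const_mul]
  exact intervalIntegral.integral_congr fun t _ => by rw [legendreScaling_eq]; ring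

theorem continuous_legendreScaling (i : ℕ) : Continuous (legendreScaling i) := by
  simp_rw [funext (legendreScaling_eq i)]
  fun_prop

theorem integral_legendreScaling_mul (i j : ℕ) :
    ∫ t in (0 : ℝ)..1, legendreScaling i t * legendreScaling j t = if i = j then 1 else 0 := by
  rw [integral_mul_legendreScaling]
  simp_rw [mul_comm (legendreScaling i _)]
  rw [integral_mul_legendreScaling]
  split_ifs with hij
  · subst hij
    rw [integral_eval_legendrePoly_mul_self, ← mul_assoc, Real.mul_self_sqrt (by positivity)]
    field_simp
  · rw [integral_eval_legendrePoly_mul_eq_zero (Ne.symm hij), mul_zero, mul_zero]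

theorem abs_legendreScaling_le (i : ℕ) {t : ℝ} (ht : t ∈ Set.Icc (0 : ℝ) 1) :
    |legendreScaling i t| ≤ √(2 * i + 1) := by
  rw [legendreScaling_eq, abs_mul, abs_of_nonneg (Real.sqrt_nonneg _)]
  exact mul_le_of_le_one_right (Real.sqrt_nonneg _)
    (abs_eval_legendrePoly_le_one i ⟨by linarith [ht.1], by linarith [ht.2]⟩)

theorem mul_abs_integral_mul_legendreScaling_le {f : ℝ → ℝ} (hf : ContDiff ℝ 2 f) (i : ℕ) :
    i * (i + 1) * |∫ t in (0 : ℝ)..1, f t * legendreScaling i t| ≤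
      √(∫ t in (0 : ℝ)..1, deriv (fun t => t * (1 - t) * deriv f t) t ^ 2) := by
  set G := deriv (fun t => t * (1 - t) * deriv f t)
  have hG : Continuous G :=
    ((contDiff_id.mul (contDiff_const.sub contDiff_id)).mul hf.deriv').continuous_deriv le_rfl
  -- `φ i` is an eigenfunction of the symmetric operator `u ↦ (t (1 - t) u')'`.
  have hG_coeff : -(i * (i + 1)) * ∫ t in (0 : ℝ)..1, f t * legendreScaling i t =
      ∫ t in (0 : ℝ)..1, G t * legendreScaling i t := by
    have h := integral_mul_deriv_mul_deriv_comm (a := 0) (b := 1) (w := fun t => t * (1 - t)) hf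
      (contDiff_eval_two_mul_sub_one (legendrePoly i)) (by fun_prop) (by norm_num) (by norm_num)
    simp_rw [deriv_mul_deriv_eval_legendrePoly, mul_left_comm (f _),
      intervalIntegral.integral_const_mul] at h
    rw [integral_mul_legendreScaling, integral_mul_legendreScaling, ← h]
    ring
  have hbessel := sq_integral_mul_le_integral_sq zero_le_one hG (continuous_legendreScaling i)
    (by simpa using integral_legendreScaling_mul i i)
  rw [← hG_coeff] at hbessel
  calc (i * (i + 1) : ℝ) * |∫ t in (0 : ℝ)..1, f t * legendreScaling i t|
      = |-(i * (i + 1)) * ∫ t in (0 : ℝ)..1, f t * legendreScaling i t| := by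
        rw [abs_mul, abs_neg, abs_of_nonneg (a := (i : ℝ) * (i + 1)) (by positivity)]
    _ = √((-(i * (i + 1)) * ∫ t in (0 : ℝ)..1, f t * legendreScaling i t) ^ 2) :=
        (Real.sqrt_sq_eq_abs _).symm
    _ ≤ √(∫ t in (0 : ℝ)..1, G t ^ 2) := Real.sqrt_le_sqrt hbessel

theorem eqOn_zero_of_forall_integral_mul_legendreScaling_eq_zero {h : ℝ → ℝ}
    (hh : ContinuousOn h (Set.Icc 0 1))
    (horth : ∀ i, ∫ t in (0 : ℝ)..1, h t * legendreScaling i t = 0) :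
    Set.EqOn h 0 (Set.Icc 0 1) := by
  let S : Polynomial.Sequence ℝ := ⟨legendrePoly, degree_legendrePoly⟩
  have hJ : shiftedMoment h (hh.intervalIntegrable_of_Icc zero_le_one) = 0 := by
    refine LinearMap.ext_on_range
      (S.span fun i => isUnit_iff_ne_zero.mpr (leadingCoeff_ne_zero.mpr (S.ne_zero i))) fun i => ?_
    have hi := horth i
    rw [integral_mul_legendreScaling] at hi
    exact (mul_eq_zero.mp hi).resolve_left (by positivity)
  refine eqOn_zero_of_forall_integral_mul_eval_eq_zero one_pos hh fun p => ?_
  have hp := LinearMap.congr_fun hJ (p.comp (C (1 / 2) * (X + 1)))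
  rw [shiftedMoment_apply] at hp
  simpa [eval_comp] using hp

theorem legendre_series_tendstoUniformlyOn_general (f : ℝ → ℝ)
    (hf : ContDiff ℝ 2 f) :
    TendstoUniformlyOn (fun n x => legendrePartialSum n f x) f atTop
      (Set.Icc (0:ℝ) 1) := by
  set c : ℕ → ℝ := fun i => ∫ t in (0 : ℝ)..1, f t * legendreScaling i t
  have hterm : ∀ i, ∀ x ∈ Set.Icc (0 : ℝ) 1,
      ‖c i * legendreScaling i x‖ ≤ |c i| * √(2 * i + 1) := fun i x hx => by
    rw [norm_mul, Real.norm_eq_abs]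
    exact mul_le_mul_of_nonneg_left (abs_legendreScaling_le i hx) (abs_nonneg _)
  have hu : Summable fun i : ℕ => |c i| * √(2 * i + 1) :=
    summable_abs_mul_sqrt_of_mul_abs_le (mul_abs_integral_mul_legendreScaling_le hf)
  refine (tendstoUniformlyOn_tsum_nat hu hterm).congr_right (Set.EqOn.symm ?_)
  exact eqOn_tsum_of_orthonormal zero_le_one continuous_legendreScaling integral_legendreScaling_mul
    (fun _ => eqOn_zero_of_forall_integral_mul_legendreScaling_eq_zero) hf.continuous.continuousOn
    hu hterm

/-- uniform convergence on `[0,1]` of the Fourier–Legendre series of a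
`C²` function with bounded second derivative. -/
theorem legendre_series_tendstoUniformlyOn (f : ℝ → ℝ) (K : ℝ)
    (hf : ContDiff ℝ 2 f)
    (hK : ∀ x ∈ Set.Icc (0:ℝ) 1, |iteratedDeriv 2 f x| ≤ K) :
    TendstoUniformlyOn (fun n x => legendrePartialSum n f x) f atTop
      (Set.Icc (0:ℝ) 1) :=
  legendre_series_tendstoUniformlyOn_general f hf
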